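/- arXiv:1907.12113 — 2 statements merged into one kernel-verified Lean document; each statement's English description precedes it below -/
import Mathlib

section
/- Let H₁ : N_*(E(2)) → N_*(E(4)) be the degree-1 F₂-linear map defined on basis elements by H₁(σ₀,…,σ_n) = Σ_{i=0}^n ((23)fσ₀, …, (23)fσ_i, gσ_i, …, gσ_n), where f, g : Σ₂ → Σ₄ satisfy f(12) = (13)(24), g(12) = (12)(34). Then ∂ ∘ H₁ + H₁ ∘ ∂ = (23)·N_*(E(f)) + N_*(E(g)), i.e. H₁ is a chain homotopy between (23) composed with the map induced by f and the map induced by g. -/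
open Equiv Finsupp

/-- An `n`-simplex of the simplicial set `E(r)`: an `(n+1)`-tuple of
permutations of `r` elements. -/
abbrev Tup (r n : ℕ) := Fin (n + 1) → Perm (Fin r)

/-- Chains on `E(r)` over `F₂` (before normalization). -/
abbrev Ch (r n : ℕ) := Tup r n →₀ ZMod 2

/-- The `j`-th face of a tuple: delete the `j`-th entry. -/
def face {r n : ℕ} (j : Fin (n + 2)) (σ : Tup r (n + 1)) : Tup r n :=
  σ ∘ j.succAbove

/-- The boundary of a basis element: the (mod 2) sum of its faces. -/
noncomputable def bdryEl {r n : ℕ} (σ : Tup r (n + 1)) : Ch r n :=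
  ∑ j : Fin (n + 2), single (face j σ) 1

/-- A tuple is degenerate when two consecutive entries are equal. -/
def IsDegen {r n : ℕ} (σ : Tup r n) : Prop :=
  ∃ j : Fin n, σ j.castSucc = σ j.succ

/-- The submodule spanned by degenerate tuples; normalized chains
`N_*(E(r))` are the quotient by this submodule. -/
noncomputable def degSub (r n : ℕ) : Submodule (ZMod 2) (Ch r n) :=
  Submodule.span (ZMod 2) {x | ∃ σ : Tup r n, IsDegen σ ∧ x = single σ 1}

/-- The element `x̃_i = (e, (12), e, …, (12)^i)` of `E(2)_i`. -/
def xt (i : ℕ) : Tup 2 i := fun k => (swap 0 1) ^ (k : ℕ)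


/-- The boundary, extended linearly to chains. -/
noncomputable def bdry {r n : ℕ} : Ch r (n + 1) →ₗ[ZMod 2] Ch r n :=
  Finsupp.lift (Ch r n) (ZMod 2) (Tup r (n + 1)) bdryEl

/-- The basis-level value of the degree-1 map `H₁ : N_*(E(2)) → N_*(E(4))`:
`H₁(σ₀,…,σ_n) = Σ_{i=0}^n ((23)fσ₀, …, (23)fσ_i, gσ_i, …, gσ_n)`. -/
noncomputable def H1el (f g : Perm (Fin 2) →* Perm (Fin 4)) {n : ℕ}
    (σ : Tup 2 n) : Ch 4 (n + 1) :=
  ∑ i : Fin (n + 1),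
    single (fun k : Fin (n + 2) =>
      if h : (k : ℕ) ≤ (i : ℕ) then
        swap 1 2 * f (σ ⟨(k : ℕ), by have := i.isLt; omega⟩)
      else g (σ ⟨(k : ℕ) - 1, by have := k.isLt; omega⟩)) 1

namespace H1Aux

lemma bdry_single {r n : ℕ} (τ : Tup r (n+1)) :
    bdry (single τ (1 : ZMod 2)) = bdryEl τ := by
  simp [bdry, Finsupp.lift_apply, Finsupp.sum_single_index]

def sa (j m : ℕ) : ℕ := if m < j then m else m + 1

lemma succAbove_val {N : ℕ} (j : Fin (N+1)) (k : Fin N) :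
    (j.succAbove k : ℕ) = sa j k := by
  rw [Fin.succAbove, sa]
  split_ifs with h1 h2 h2
  · rfl
  · exact absurd (by simpa [Fin.lt_def] using h1) h2
  · exact absurd (by simpa [Fin.lt_def] using h2) h1
  · rfl

variable (f g : Perm (Fin 2) →* Perm (Fin 4)) {n : ℕ} (σ : Tup 2 (n + 1))

noncomputable def aa (m : ℕ) : Perm (Fin 4) :=
  swap 1 2 * f (σ ⟨min m (n + 1), by omega⟩)

noncomputable def bb (m : ℕ) : Perm (Fin 4) :=
  g (σ ⟨min m (n + 1), by omega⟩)

noncomputable def ee (i j : ℕ) : Tup 4 (n + 1) :=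
  fun k => if sa j (k : ℕ) ≤ i then aa f σ (sa j (k : ℕ))
           else bb g σ (sa j (k : ℕ) - 1)

noncomputable def dd (j i : ℕ) : Tup 4 (n + 1) :=
  fun k => if (k : ℕ) ≤ i then aa f σ (sa j (k : ℕ))
           else bb g σ (sa j ((k : ℕ) - 1))

noncomputable def mm (p : ℕ) : Tup 4 (n + 1) :=
  fun k => if (k : ℕ) < p then aa f σ (k : ℕ) else bb g σ (k : ℕ)

lemma aa_eq (m : ℕ) (h : m ≤ n + 1) (pf : m < n + 2) :
    swap 1 2 * f (σ ⟨m, pf⟩) = aa f σ m := by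
  simp [aa, Nat.min_eq_left h]

lemma bb_eq (m : ℕ) (h : m ≤ n + 1) (pf : m < n + 2) :
    g (σ ⟨m, pf⟩) = bb g σ m := by
  simp [bb, Nat.min_eq_left h]

lemma aa_eq' (m m' : ℕ) (hmm : m = m') (h : m ≤ n + 1) (pf : m < n + 2) :
    swap 1 2 * f (σ ⟨m, pf⟩) = aa f σ m' := by
  subst hmm; exact aa_eq f σ m h pf

lemma bb_eq' (m m' : ℕ) (hmm : m = m') (h : m ≤ n + 1) (pf : m < n + 2) :
    g (σ ⟨m, pf⟩) = bb g σ m' := by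
  subst hmm; exact bb_eq g σ m h pf

lemma bdry_H1el :
    bdry (H1el f g σ) =
      ∑ i : Fin (n + 2), ∑ j : Fin (n + 3), single (ee f g σ i j) 1 := by
  rw [H1el, map_sum]
  refine Finset.sum_congr rfl fun i _ => ?_
  rw [bdry_single, bdryEl]
  refine Finset.sum_congr rfl fun j _ => ?_
  congr 1
  funext k
  simp only [face, Function.comp_apply]
  have hv := succAbove_val j k
  have hlt := (j.succAbove k).isLt
  simp only [ee]
  have hi := i.isLt
  by_cases h : sa (j:ℕ) (k:ℕ) ≤ (i:ℕ)
  · rw [if_pos h, dif_pos (hv ▸ h)]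
    exact aa_eq' f σ _ _ hv (by omega) _
  · rw [if_neg h, dif_neg (hv ▸ h)]
    exact bb_eq' g σ _ _ (by omega) (by omega) _

lemma H1el_face (j : Fin (n + 2)) :
    H1el f g (face j σ) =
      ∑ i : Fin (n + 1), single (dd f g σ (j : ℕ) i) 1 := by
  rw [H1el]
  refine Finset.sum_congr rfl fun i _ => ?_
  congr 1
  funext k
  have hi := i.isLt
  have hk := k.isLt
  simp only [dd, face, Function.comp_apply]
  by_cases h : (k : ℕ) ≤ (i : ℕ)
  · rw [dif_pos h, if_pos h]
    exact aa_eq' f σ _ _ (succAbove_val j ⟨(k:ℕ), by omega⟩) (by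
      have := succAbove_val j (⟨(k:ℕ), by omega⟩ : Fin (n+1))
      have h2 := (j.succAbove (⟨(k:ℕ), by omega⟩ : Fin (n+1))).isLt
      omega) _
  · rw [dif_neg h, if_neg h]
    exact bb_eq' g σ _ _ (succAbove_val j ⟨(k:ℕ) - 1, by omega⟩) (by
      have := succAbove_val j (⟨(k:ℕ) - 1, by omega⟩ : Fin (n+1))
      have h2 := (j.succAbove (⟨(k:ℕ) - 1, by omega⟩ : Fin (n+1))).isLt
      omega) _

lemma K1 (i j : ℕ) (hj : j ≤ i) : ee f g σ (i+1) j = dd f g σ j i := by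
  funext k
  have hk := k.isLt
  simp only [ee, dd, sa]
  split_ifs <;> first | rfl | omega | (congr 1; omega)

lemma K2 (i j : ℕ) (hij : i < j) : ee f g σ i (j+1) = dd f g σ j i := by
  funext k
  have hk := k.isLt
  simp only [ee, dd, sa]
  split_ifs <;> first | rfl | omega | (congr 1; omega)

lemma K3a (i : ℕ) : ee f g σ i i = mm f g σ i := by
  funext k
  have hk := k.isLt
  simp only [ee, mm, sa]
  split_ifs <;> first | rfl | omega | (congr 1; omega)

lemma K3b (i : ℕ) : ee f g σ i (i+1) = mm f g σ (i+1) := by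
  funext k
  have hk := k.isLt
  simp only [ee, mm, sa]
  split_ifs <;> first | rfl | omega | (congr 1; omega)

lemma mm_zero : mm f g σ 0 = fun k => g (σ k) := by
  funext k
  have hk := k.isLt
  simp only [mm, if_neg (by omega : ¬ (k:ℕ) < 0)]
  rw [← bb_eq g σ (k:ℕ) (by omega) (by omega)]

lemma mm_top : mm f g σ (n + 2) = fun k => swap 1 2 * f (σ k) := by
  funext k
  have hk := k.isLt
  simp only [mm, if_pos (by omega : (k:ℕ) < n + 2)]
  rw [← aa_eq f σ (k:ℕ) (by omega) (by omega)]

lemma add_self_zero {M : Type*} [AddCommMonoid M] [Module (ZMod 2) M] (x : M) :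
    x + x = 0 := by
  have h : (2 : ZMod 2) • x = 0 := by
    rw [show (2 : ZMod 2) = 0 from rfl, zero_smul]
  rw [two_smul] at h
  exact h

lemma telescope {M : Type*} [AddCommMonoid M] [Module (ZMod 2) M] (m : ℕ → M) (N : ℕ) :
    ∑ i ∈ Finset.range N, (m i + m (i + 1)) = m 0 + m N := by
  induction N with
  | zero => simpa using (add_self_zero (m 0)).symm
  | succ N ih =>
      rw [Finset.sum_range_succ, ih, add_assoc, ← add_assoc (m N) (m N),
        add_self_zero, zero_add]

lemma offdiag :
    ∑ p ∈ (Finset.range (n+2) ×ˢ Finset.range (n+3)).filter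
        (fun p => ¬(p.2 = p.1 ∨ p.2 = p.1 + 1)),
        single (ee f g σ p.1 p.2) (1 : ZMod 2)
      = ∑ q ∈ Finset.range (n+2) ×ˢ Finset.range (n+1),
          single (dd f g σ q.1 q.2) (1 : ZMod 2) := by
  refine Finset.sum_nbij'
    (fun p => if p.2 < p.1 then (p.2, p.1 - 1) else (p.2 - 1, p.1))
    (fun q => if q.1 ≤ q.2 then (q.2 + 1, q.1) else (q.2, q.1 + 1))
    ?_ ?_ ?_ ?_ ?_
  · intro p hp
    simp only [Finset.mem_filter, Finset.mem_product, Finset.mem_range] at hp ⊢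
    split_ifs <;> constructor <;> omega
  · intro q hq
    simp only [Finset.mem_filter, Finset.mem_product, Finset.mem_range] at hq ⊢
    split_ifs <;> refine ⟨⟨by omega, by omega⟩, by omega⟩
  · intro p hp
    obtain ⟨x, y⟩ := p
    simp only [Finset.mem_filter, Finset.mem_product, Finset.mem_range] at hp
    dsimp only
    split_ifs <;> simp_all [Prod.ext_iff] <;> omega
  · intro q hq
    obtain ⟨x, y⟩ := q
    simp only [Finset.mem_product, Finset.mem_range] at hq
    dsimp only
    split_ifs <;> simp_all [Prod.ext_iff] <;> omega
  · intro p hp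
    simp only [Finset.mem_filter, Finset.mem_product, Finset.mem_range] at hp
    by_cases h : p.2 < p.1
    · rw [if_pos h]
      have h1 : p.1 = (p.1 - 1) + 1 := by omega
      rw [show ee f g σ p.1 p.2 = ee f g σ ((p.1 - 1) + 1) p.2 from by rw [← h1]]
      rw [K1 f g σ (p.1 - 1) p.2 (by omega)]
    · rw [if_neg h]
      have h1 : p.2 = (p.2 - 1) + 1 := by omega
      rw [show ee f g σ p.1 p.2 = ee f g σ p.1 ((p.2 - 1) + 1) from by rw [← h1]]
      rw [K2 f g σ p.1 (p.2 - 1) (by omega)]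

lemma diag (i : ℕ) (hi : i < n + 2) :
    ∑ j ∈ (Finset.range (n+3)).filter (fun j => j = i ∨ j = i + 1),
        single (ee f g σ i j) (1 : ZMod 2)
      = single (mm f g σ i) 1 + single (mm f g σ (i + 1)) 1 := by
  have hset : (Finset.range (n+3)).filter (fun j => j = i ∨ j = i + 1) = {i, i + 1} := by
    ext j
    simp only [Finset.mem_filter, Finset.mem_range, Finset.mem_insert, Finset.mem_singleton]
    omega
  rw [hset, Finset.sum_pair (by omega : i ≠ i + 1), K3a, K3b]

lemma main_sum :
    bdry (H1el f g σ) + ∑ j : Fin (n + 2), H1el f g (face j σ) =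
      single (fun k => swap 1 2 * f (σ k)) 1 + single (fun k => g (σ k)) 1 := by
  rw [bdry_H1el, Finset.sum_congr rfl (fun j _ => H1el_face f g σ j)]
  have e1 : (∑ i : Fin (n + 2), ∑ j : Fin (n + 3), single (ee f g σ i j) (1 : ZMod 2))
      = ∑ i ∈ Finset.range (n+2), ∑ j ∈ Finset.range (n+3), single (ee f g σ i j) 1 := by
    rw [Fin.sum_univ_eq_sum_range (fun i => ∑ j : Fin (n + 3), single (ee f g σ i j) 1)]
    exact Finset.sum_congr rfl fun i _ =>
      Fin.sum_univ_eq_sum_range (fun j => single (ee f g σ i j) 1) _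
  have e2 : (∑ j : Fin (n + 2), ∑ i : Fin (n + 1), single (dd f g σ j i) (1 : ZMod 2))
      = ∑ q ∈ Finset.range (n+2) ×ˢ Finset.range (n+1), single (dd f g σ q.1 q.2) 1 := by
    rw [Fin.sum_univ_eq_sum_range (fun j => ∑ i : Fin (n + 1), single (dd f g σ j i) 1),
      Finset.sum_product]
    exact Finset.sum_congr rfl fun j _ =>
      Fin.sum_univ_eq_sum_range (fun i => single (dd f g σ j i) 1) _
  rw [e1, e2]
  have e3 : (∑ i ∈ Finset.range (n+2), ∑ j ∈ Finset.range (n+3),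
      single (ee f g σ i j) (1 : ZMod 2))
      = ∑ p ∈ Finset.range (n+2) ×ˢ Finset.range (n+3), single (ee f g σ p.1 p.2) 1 := by
    rw [Finset.sum_product]
  rw [e3, ← Finset.sum_filter_add_sum_filter_not (Finset.range (n+2) ×ˢ Finset.range (n+3))
    (fun p => p.2 = p.1 ∨ p.2 = p.1 + 1), offdiag]
  have e4 : (∑ p ∈ (Finset.range (n+2) ×ˢ Finset.range (n+3)).filter
      (fun p => p.2 = p.1 ∨ p.2 = p.1 + 1), single (ee f g σ p.1 p.2) (1 : ZMod 2))
      = single (mm f g σ 0) 1 + single (mm f g σ (n + 2)) 1 := by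
    rw [Finset.sum_filter, Finset.sum_product]
    have e5 : ∀ i ∈ Finset.range (n+2),
        (∑ j ∈ Finset.range (n+3),
          if j = i ∨ j = i + 1 then single (ee f g σ i j) (1 : ZMod 2) else 0)
        = single (mm f g σ i) 1 + single (mm f g σ (i + 1)) 1 := by
      intro i hi
      rw [← Finset.sum_filter]
      exact diag f g σ i (Finset.mem_range.mp hi)
    rw [Finset.sum_congr rfl e5, telescope (fun p => single (mm f g σ p) 1) (n + 2)]
  rw [e4, mm_zero, mm_top, add_assoc, add_self_zero, add_zero]
  exact add_comm _ _
lemma main_sum0 (τ : Tup 2 0) :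
    bdry (H1el f g τ) =
      single (fun k => swap 1 2 * f (τ k)) 1 + single (fun k => g (τ k)) 1 := by
  rw [H1el, Fin.sum_univ_one, bdry_single, bdryEl, Fin.sum_univ_two, add_comm]
  congr 1
  · congr 1
    funext k
    have hk : k = 0 := Fin.fin_one_eq_zero k
    subst hk
    simp [face, Fin.succAbove]
end H1Aux

/-- `H₁` is a chain homotopy between `(23) ∘ N_*(E(f))` and `N_*(E(g))`:
`∂ ∘ H₁ + H₁ ∘ ∂ = (23)·N_*(E(f)) + N_*(E(g))` in normalized chains over `F₂`,
where `f(12) = (13)(24)` and `g(12) = (12)(34)`.  (Stated on basis elements,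
in positive degrees and in degree zero.) -/
theorem H1_homotopy
    (f g : Perm (Fin 2) →* Perm (Fin 4))
    (hf : f (swap 0 1) = swap 0 2 * swap 1 3)
    (hg : g (swap 0 1) = swap 0 1 * swap 2 3) :
    (∀ (n : ℕ) (σ : Tup 2 (n + 1)),
      (degSub 4 (n + 1)).mkQ
          (bdry (H1el f g σ) +
            ∑ j : Fin (n + 2), H1el f g (face j σ)) =
        (degSub 4 (n + 1)).mkQ
          (single (fun k => swap 1 2 * f (σ k)) 1 +
            single (fun k => g (σ k)) 1)) ∧
    (∀ σ : Tup 2 0,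
      (degSub 4 0).mkQ (bdry (H1el f g σ)) =
        (degSub 4 0).mkQ
          (single (fun k => swap 1 2 * f (σ k)) 1 +
            single (fun k => g (σ k)) 1)) := by
  constructor
  · intro n σ
    exact congrArg _ (H1Aux.main_sum f g σ)
  · intro σ
    exact congrArg _ (H1Aux.main_sum0 f g σ)
end

section
/- With H₁ as above and with Σ₂ acting on N_*(E(2)) via (12) and Σ₄ acting on N_*(E(4)) via (12)(34), the map H₁ is equivariant: H₁ ∘ (12) = (12)(34) ∘ H₁. -/
open Equiv Finsupp

/-- Componentwise left multiplication by a permutation, on chains. -/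
noncomputable def act {r n : ℕ} (c : Perm (Fin r)) : Ch r n →ₗ[ZMod 2] Ch r n :=
  Finsupp.lmapDomain (ZMod 2) (ZMod 2) (fun σ : Tup r n => fun k => c * σ k)

/-- Equivariance of `H₁`: with `Σ₂` acting on `N_*(E(2))` via `(12)` and `Σ₄`
acting on `N_*(E(4))` via `(12)(34)` (componentwise left multiplication),
`H₁ ∘ (12) = (12)(34) ∘ H₁`.  (Stated on basis elements of the normalized
chains.) -/
theorem H1_equivariant
    (f g : Perm (Fin 2) →* Perm (Fin 4))
    (hf : f (swap 0 1) = swap 0 2 * swap 1 3)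
    (hg : g (swap 0 1) = swap 0 1 * swap 2 3) :
    ∀ (n : ℕ) (σ : Tup 2 n),
      (degSub 4 (n + 1)).mkQ (H1el f g (fun k => swap 0 1 * σ k)) =
        (degSub 4 (n + 1)).mkQ (act (swap 0 1 * swap 2 3) (H1el f g σ)) := by
  intro n σ
  congr 1
  unfold H1el act
  rw [Finsupp.lmapDomain_apply, Finsupp.mapDomain_finset_sum]
  refine Finset.sum_congr rfl fun i _ => ?_
  rw [Finsupp.mapDomain_single]
  congr 1
  funext k
  by_cases h : (k : ℕ) ≤ (i : ℕ)
  · simp only [dif_pos h, map_mul, hf]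
    rw [← mul_assoc, ← mul_assoc, ← mul_assoc]
    congr 1
    decide
  · simp only [dif_neg h, map_mul, hg, mul_assoc]
end
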